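/- arXiv:1304.6883 — 5 statements merged into one kernel-verified Lean document; each statement's English description precedes it below -/
import Mathlib

section
/- For any association schemes (X,S_X) and (Y,S_Y), the assignment sending a morphism of association schemes f : (X,S_X) → (Y,S_Y) to the functor j(f) : j(X,S_X) → j(Y,S_Y) acting as f on objects and by (x,y) ↦ (f(x),f(y)) on morphisms is a bijection from Hom_AS((X,S_X),(Y,S_Y)) onto the set of morphisms of association schemoids from j(X,S_X) to j(Y,S_Y); that is, the functor j from association schemes to association schemoids is a fully faithful embedding. -/
open CategoryTheory

universe v u

/-- The set of all morphisms of a category, bundled with their endpoints. -/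
def Mor (C : Type u) [Category.{v} C] : Type max u v := Σ (x y : C), x ⟶ y

namespace Mor
variable {C : Type u} [Category.{v} C]
/-- The source of a morphism. -/
def src (m : Mor C) : C := m.1
/-- The target of a morphism. -/
def tgt (m : Mor C) : C := m.2.1
end Mor

/-- The identity of `x` as an element of `Mor C`. -/
def idMor {C : Type u} [Category.{v} C] (x : C) : Mor C := ⟨x, x, 𝟙 x⟩

/-- Bundle a morphism into `Mor C`. -/
def mk3 {C : Type u} [Category.{v} C] {x y : C} (f : x ⟶ y) : Mor C := ⟨x, y, f⟩

/-- `IsComp a b m` holds iff `a` and `b` are composable (the target of `b` is the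
source of `a`) and the composite `a ∘ b` equals `m`. -/
def IsComp {C : Type u} [Category.{v} C] (a b m : Mor C) : Prop :=
  ∃ (x y z : C) (f : x ⟶ y) (g : y ⟶ z), b = mk3 f ∧ a = mk3 g ∧ m = mk3 (f ≫ g)

/-- The fiber over `m` of the concatenation map `π_{στ} : σ ×_{ob C} τ → mor C`,
where `σ` is the class of the second (outer) factor and `τ` that of the first
(inner) factor. -/
def compFiber {C : Type u} [Category.{v} C] (σ τ : Set (Mor C)) (m : Mor C) :
    Set (Mor C × Mor C) :=
  {p | p.1 ∈ σ ∧ p.2 ∈ τ ∧ IsComp p.1 p.2 m}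

/-- A quasi-schemoid: a small category together with a partition of its set of
morphisms satisfying the concatenation axiom. -/
structure QuasiSchemoid (C : Type u) [Category.{v} C] where
  part : Set (Set (Mor C))
  isPartition : Setoid.IsPartition part
  concat : ∀ σ ∈ part, ∀ τ ∈ part, ∀ μ ∈ part, ∀ f ∈ μ, ∀ g ∈ μ,
    Nonempty ((compFiber σ τ f : Set (Mor C × Mor C)) ≃ (compFiber σ τ g : Set (Mor C × Mor C)))

/-- `p^μ_{τσ} = n` : every `m ∈ μ` has exactly `n` factorizations with outer factor
in `τ` and inner factor in `σ`. -/
def structEq {C : Type u} [Category.{v} C] (τ σ μ : Set (Mor C)) (n : ℕ) : Prop :=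
  ∀ m ∈ μ, Nat.card (compFiber τ σ m) = n

/-- The set `J₀` of identities. -/
def J0 (C : Type u) [Category.{v} C] : Set (Mor C) := {m | ∃ x : C, m = idMor x}

/-- A quasi-schemoid is unital if every class meeting `J₀` is contained in `J₀`. -/
def QuasiSchemoid.IsUnital {C : Type u} [Category.{v} C] (Q : QuasiSchemoid C) : Prop :=
  ∀ σ ∈ Q.part, (σ ∩ J0 C).Nonempty → σ ⊆ J0 C

/-- A contravariant endofunctor. -/
structure ContraFunctor (C : Type u) [Category.{v} C] where
  obj : C → C
  map : ∀ {x y : C}, (x ⟶ y) → (obj y ⟶ obj x)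
  map_id : ∀ x : C, map (𝟙 x) = 𝟙 (obj x)
  map_comp : ∀ {x y z : C} (f : x ⟶ y) (g : y ⟶ z), map (f ≫ g) = map g ≫ map f

/-- The action of a contravariant functor on bundled morphisms. -/
def ContraFunctor.onMor {C : Type u} [Category.{v} C] (T : ContraFunctor C) (m : Mor C) :
    Mor C :=
  ⟨T.obj m.2.1, T.obj m.1, T.map m.2.2⟩

/-- The set `J` of endomorphisms. -/
def JEndo (C : Type u) [Category.{v} C] : Set (Mor C) := {m | m.src = m.tgt}

/-- An association schemoid. -/
structure AssnSchemoid (C : Type u) [Category.{v} C] extends QuasiSchemoid C where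
  T : ContraFunctor C
  T_invol : ∀ m : Mor C, T.onMor (T.onMor m) = m
  T_part : ∀ σ ∈ part, T.onMor '' σ ∈ part
  endo : ∀ σ ∈ part, (σ ∩ JEndo C).Nonempty → σ ⊆ JEndo C

universe v₂ u₂

/-- The action of a functor on bundled morphisms. -/
def morMap {C : Type u} {D : Type u₂} [Category.{v} C] [Category.{v₂} D] (F : C ⥤ D)
    (m : Mor C) : Mor D :=
  ⟨F.obj m.1, F.obj m.2.1, F.map m.2.2⟩

/-- A functor is a morphism of quasi-schemoids if each class of the source partition is
mapped into some class of the target partition. -/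
def IsQSMor {C : Type u} {D : Type u₂} [Category.{v} C] [Category.{v₂} D]
    (SC : Set (Set (Mor C))) (SD : Set (Set (Mor D))) (F : C ⥤ D) : Prop :=
  ∀ σ ∈ SC, ∃ τ ∈ SD, morMap F '' σ ⊆ τ

/-- A morphism of association schemoids: a morphism of quasi-schemoids commuting with the
contravariant involutions. -/
def IsASMor {C : Type u} {D : Type u₂} [Category.{v} C] [Category.{v₂} D]
    (SC : Set (Set (Mor C))) (SD : Set (Set (Mor D)))
    (TC : ContraFunctor C) (TD : ContraFunctor D) (F : C ⥤ D) : Prop :=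
  IsQSMor SC SD F ∧ ∀ m : Mor C, morMap F (TC.onMor m) = TD.onMor (morMap F m)

/-- `S₀` : the classes containing some identity. -/
def S0 {C : Type u} [Category.{v} C] (S : Set (Set (Mor C))) : Set (Set (Mor C)) :=
  {α | α ∈ S ∧ ∃ x : C, idMor x ∈ α}

/-- `_αS_β = {σ ∈ S | p^σ_{σα} = p^σ_{βσ} = 1}`. -/
def hom2 {C : Type u} [Category.{v} C] (S : Set (Set (Mor C))) (α β : Set (Mor C)) :
    Set (Set (Mor C)) :=
  {σ | σ ∈ S ∧ structEq σ α σ 1 ∧ structEq β σ σ 1}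

/-- The partition class containing a given morphism. -/
def classOf {C : Type u} [Category.{v} C] (S : Set (Set (Mor C))) (m : Mor C) :
    Set (Mor C) :=
  {m' | ∃ σ ∈ S, m ∈ σ ∧ m' ∈ σ}

/-- An association scheme on a finite set `X`. -/
structure AssocScheme (X : Type u) [Fintype X] where
  part : Set (Set (X × X))
  isPartition : Setoid.IsPartition part
  diag_mem : {p : X × X | p.1 = p.2} ∈ part
  symm_mem : ∀ s ∈ part, Prod.swap '' s ∈ part
  regular : ∀ e ∈ part, ∀ f ∈ part, ∀ g ∈ part, ∀ p ∈ g, ∀ q ∈ g,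
    Nat.card {y : X | (p.1, y) ∈ e ∧ (y, p.2) ∈ f} =
      Nat.card {y : X | (q.1, y) ∈ e ∧ (y, q.2) ∈ f}

/-- The underlying category of the schemoid `j(X,S)` : objects are the points of `X`
and there is exactly one morphism `(x,y) : y ⟶ x` for every pair `(x,y)`. -/
def JCat (X : Type u) : Type u := X

instance JCat.category (X : Type u) : Category (JCat X) where
  Hom _ _ := PUnit
  id _ := ⟨⟩
  comp _ _ := ⟨⟩

/-- The class of morphisms of `JCat X` corresponding to a set of pairs `s ⊆ X × X` :
the morphism `(x,y) : y ⟶ x` belongs to it iff `(x,y) ∈ s`. -/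
def jPartClass {X : Type u} (s : Set (X × X)) : Set (Mor (JCat X)) :=
  {m | ((Mor.tgt (C := JCat X) m, Mor.src (C := JCat X) m) : X × X) ∈ s}

/-- The partition of `mor(j(X,S))` induced by an association scheme `(X,S)`. -/
def jPart {X : Type u} [Fintype X] (A : AssocScheme X) : Set (Set (Mor (JCat X))) :=
  {t | ∃ s ∈ A.part, t = jPartClass s}

/-- The contravariant involution of `j(X,S)` : `T(x) = x`, `T(x,y) = (y,x)`. -/
def jT (X : Type u) : ContraFunctor (JCat X) where
  obj x := x
  map _ := ⟨⟩
  map_id _ := rfl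
  map_comp _ _ := rfl

/-- The functor `j(f) : j(X,S_X) ⥤ j(Y,S_Y)` induced by a map `f : X → Y`. -/
def jFunctor {X : Type u} {Y : Type u} (f : X → Y) : JCat X ⥤ JCat Y where
  obj x := f x
  map _ := ⟨⟩

/-- A morphism of association schemes. -/
def IsSchemeHom {X : Type u} {Y : Type u} [Fintype X] [Fintype Y]
    (A : AssocScheme X) (B : AssocScheme Y) (f : X → Y) : Prop :=
  ∀ s ∈ A.part, ∃ t ∈ B.part, (fun p : X × X => (f p.1, f p.2)) '' s ⊆ t

/-! `j(X)` is thin with exactly one morphism per pair of points, so a functor `j(X) ⥤ j(Y)` is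
nothing but its object map `f`, and it carries the class of `s ⊆ X × X` into that of `t` exactly
when `f × f` carries `s` into `t`. Compatibility with the transpositions `T(x, y) = (y, x)` holds
definitionally for every `j(f)`. -/

section JFunctor

variable {X Y : Type u}

instance JCat.isThin : Quiver.IsThin (JCat X) := fun _ _ => inferInstanceAs (Subsingleton PUnit)

/-- Target first: `(x, y) : y ⟶ x` corresponds to `(x, y)`, as in `jPartClass`. -/
def JCat.morEquiv : Mor (JCat X) ≃ X × X where
  toFun m := (m.tgt, m.src)
  invFun p := ⟨p.2, p.1, ⟨⟩⟩
  left_inv _ := rfl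
  right_inv _ := rfl

theorem jPartClass_eq_preimage (s : Set (X × X)) : jPartClass s = JCat.morEquiv ⁻¹' s := rfl

theorem image_jPartClass_subset_iff (f : X → Y) (s : Set (X × X)) (t : Set (Y × Y)) :
    morMap (jFunctor f) '' jPartClass s ⊆ jPartClass t ↔ Prod.map f f '' s ⊆ t := by
  simp only [jPartClass_eq_preimage, Set.image_subset_iff]
  rw [← JCat.morEquiv.symm.surjective.preimage_subset_preimage_iff]
  rfl

theorem jFunctor_injective : Function.Injective (jFunctor : (X → Y) → JCat X ⥤ JCat Y) :=
  fun _ _ h => funext fun x => congrArg (fun F : JCat X ⥤ JCat Y => F.obj x) h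

theorem jFunctor_obj_eq (F : JCat X ⥤ JCat Y) : jFunctor F.obj = F :=
  CategoryTheory.Functor.ext (fun _ => rfl) (fun _ _ _ => Subsingleton.elim _ _)

variable [Fintype X] [Fintype Y] (A : AssocScheme X) (B : AssocScheme Y)

theorem isQSMor_jFunctor_iff (f : X → Y) :
    IsQSMor (jPart A) (jPart B) (jFunctor f) ↔ IsSchemeHom A B f := by
  constructor
  · intro h s hs
    obtain ⟨_, ⟨t, ht, rfl⟩, hsub⟩ := h _ ⟨s, hs, rfl⟩
    exact ⟨t, ht, (image_jPartClass_subset_iff f s t).mp hsub⟩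
  · rintro h _ ⟨s, hs, rfl⟩
    obtain ⟨t, ht, hsub⟩ := h s hs
    exact ⟨_, ⟨t, ht, rfl⟩, (image_jPartClass_subset_iff f s t).mpr hsub⟩

theorem isASMor_jFunctor_iff (f : X → Y) :
    IsASMor (jPart A) (jPart B) (jT X) (jT Y) (jFunctor f) ↔ IsSchemeHom A B f :=
  (and_iff_left fun _ => rfl).trans (isQSMor_jFunctor_iff A B f)

end JFunctor

/-- Theorem 3.2 (i) of Kuribayashi–Matsuo: the functor `j : AS → ASmd` is a fully
faithful embedding: for association schemes `(X,S_X)` and `(Y,S_Y)`, the assignment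
`f ↦ j(f)` is a bijection from `Hom_AS((X,S_X),(Y,S_Y))` onto the set of morphisms of
association schemoids `j(X,S_X) → j(Y,S_Y)`. -/
theorem jFunctor_bijOn_schemoid_morphisms
    {X : Type u} {Y : Type u} [Fintype X] [Fintype Y]
    (A : AssocScheme X) (B : AssocScheme Y) :
    Set.BijOn (fun f : X → Y => jFunctor f)
      {f : X → Y | IsSchemeHom A B f}
      {F : JCat X ⥤ JCat Y | IsASMor (jPart A) (jPart B) (jT X) (jT Y) F} := by
  refine ⟨fun f hf => (isASMor_jFunctor_iff A B f).mpr hf, jFunctor_injective.injOn, ?_⟩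
  intro F hF
  rw [← jFunctor_obj_eq F] at hF ⊢
  exact ⟨F.obj, (isASMor_jFunctor_iff A B F.obj).mp hF, rfl⟩
end

section
/- For any groupoids K and H, the map sending a functor F : K → H to the induced morphism of quasi-schemoids S̃(F) : S̃(K) → S̃(H) is injective; that is, the functor S̃ from groupoids to quasi-schemoids is faithful. -/
open CategoryTheory

universe v u

universe v₂ u₂

/-- The underlying objects of the schemoid `S̃(H)` : the morphisms of `H`. -/
def TildeCat (H : Type u) [Category.{v} H] : Type max u v := Mor H

/-- Reinterpret an object of `TildeCat H` as a morphism of `H`. -/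
def TildeCat.toMor {H : Type u} [Category.{v} H] (g : TildeCat H) : Mor H := g

/-- The category `S̃(H)` : `Hom(g,h)` has exactly one element `(h,g)` when
`t(h) = t(g)`, and is empty otherwise. -/
instance TildeCat.category (H : Type u) [Category.{v} H] : Category (TildeCat H) where
  Hom g h := PLift (g.toMor.tgt = h.toMor.tgt)
  id _ := ⟨rfl⟩
  comp p q := ⟨p.down.trans q.down⟩
  id_comp _ := rfl
  comp_id _ := rfl
  assoc _ _ _ := rfl

/-- `S̃(H)` is a groupoid. -/
instance TildeCat.groupoid (H : Type u) [Category.{v} H] : Groupoid (TildeCat H) where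
  inv p := ⟨p.down.symm⟩
  inv_comp _ := rfl
  comp_inv _ := rfl

/-- For `g, h : mor H` with `t(g) = t(h)`, the morphism `h⁻¹ ∘ g` of the groupoid `H`. -/
def conjDiff {H : Type u} [Groupoid.{v} H] (g h : Mor H) (e : Mor.tgt g = Mor.tgt h) :
    Mor H :=
  ⟨g.1, h.1, g.2.2 ≫ eqToHom e ≫ Groupoid.inv h.2.2⟩

/-- The class `G_f = {(k,l) | k⁻¹ ∘ l = f}` of the partition of `mor(S̃(H))`:
the morphism `(h,g) : g → h` belongs to `G_f` iff `h⁻¹ ∘ g = f`. -/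
def tildeClass {H : Type u} [Groupoid.{v} H] (f : Mor H) : Set (Mor (TildeCat H)) :=
  {m | conjDiff (TildeCat.toMor m.1) (TildeCat.toMor m.2.1) m.2.2.down = f}

/-- The partition of `mor(S̃(H))` into the classes `G_f`. -/
def tildePart (H : Type u) [Groupoid.{v} H] : Set (Set (Mor (TildeCat H))) :=
  {s | ∃ f : Mor H, s = tildeClass f}

/-- The contravariant involution of `S̃(H)` : `T(f) = f` on objects and
`T(h,g) = (g,h)` on morphisms. -/
def tildeT (H : Type u) [Category.{v} H] : ContraFunctor (TildeCat H) where
  obj g := g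
  map p := ⟨p.down.symm⟩
  map_id _ := rfl
  map_comp _ _ := rfl

/-- The functor `S̃(F) : S̃(K) → S̃(H)` induced by a functor `F : K ⥤ H`. -/
def tildeMap {K : Type u} {H : Type u} [Category.{v} K] [Category.{v} H] (F : K ⥤ H) :
    TildeCat K ⥤ TildeCat H where
  obj g := morMap F g
  map p := ⟨congrArg F.obj p.down⟩
  map_id _ := rfl
  map_comp _ _ := rfl

/-- The base points of `S̃(H)` : the identities of `H`, viewed as objects of `S̃(H)`. -/
def tildeBase (H : Type u) [Category.{v} H] : Set (TildeCat H) :=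
  {m | ∃ x : H, m = idMor x}

lemma Mor.heq_of_mk3_eq {C : Type u} [Category.{v} C] {a b a' b' : C} {f : a ⟶ b}
    {g : a' ⟶ b'} (h : mk3 f = mk3 g) : HEq f g := by
  obtain ⟨rfl, hsnd⟩ := Sigma.mk.inj_iff.mp h
  obtain ⟨rfl, hf⟩ := Sigma.mk.inj_iff.mp (eq_of_heq hsnd)
  exact hf

lemma CategoryTheory.Functor.ext_of_morMap {C : Type u} {D : Type u₂} [Category.{v} C]
    [Category.{v₂} D] {F G : C ⥤ D} (h : ∀ m : Mor C, morMap F m = morMap G m) : F = G :=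
  Functor.hext (fun x => congrArg Sigma.fst (h (idMor x)))
    (fun _ _ f => Mor.heq_of_mk3_eq (h (mk3 f)))

/-- Theorem 3.2 (ii) of Kuribayashi–Matsuo: the functor `S̃( ) : Gpd → qASmd` is
faithful, i.e. `F ↦ S̃(F)` is injective. -/
theorem tildeMap_injective {K : Type u} {H : Type u} [Groupoid.{v} K] [Groupoid.{v} H] :
    Function.Injective (fun F : K ⥤ H => tildeMap F) := by
  intro F G h
  exact Functor.ext_of_morMap fun m => congrArg (fun T : TildeCat K ⥤ TildeCat H => T.obj m) h
end

section
/- Let (C,S,T) be a semi-thin association schemoid. For any α, β, γ ∈ S₀, σ ∈ _αS_β and τ ∈ _βS_γ, there exists a unique element μ ∈ _αS_γ such that p^μ_{τσ} = 1; moreover p^{μ'}_{τσ} = 0 for every μ' ∈ S with μ' ≠ μ. -/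
open CategoryTheory

universe v u

universe v₂ u₂

/-- The inverse of a bundled morphism in a groupoid. -/
def morInv {C : Type u} [Groupoid.{v} C] (m : Mor C) : Mor C :=
  ⟨m.2.1, m.1, Groupoid.inv m.2.2⟩

/-- A semi-thin association schemoid. -/
def IsSemiThin {C : Type u} [Groupoid.{v} C] (A : AssnSchemoid C) : Prop :=
  A.toQuasiSchemoid.IsUnital ∧
  (∀ σ ∈ A.part, ∀ x : C, ({f | f ∈ σ ∧ Mor.src f = x} : Set (Mor C)).Subsingleton) ∧
  (∀ m : Mor C, A.T.onMor m = morInv m)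

/-- A thin association schemoid with base point set `V`. -/
def IsThin {C : Type u} [Groupoid.{v} C] (A : AssnSchemoid C) (V : Set C) : Prop :=
  IsSemiThin A ∧
  (∀ x y : C, Subsingleton (x ⟶ y)) ∧
  (∀ x : C, ∃! v : C, v ∈ V ∧ Nonempty (x ⟶ v)) ∧
  Set.BijOn (fun v => classOf A.part (idMor v)) V (S0 A.part)

/-!
Semi-thinness says that a morphism of a class is determined by its source; applied to the
inverse class, also by its target. Hence a morphism has at most one factorisation `t ∘ s`
with `s ∈ σ`, `t ∈ τ`. Fix one composable pair `g₀ ∘ f₀` (it exists because the concatenation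
axiom for `τ⁻¹ ∘ τ` over identities of `β` makes `τ` start at every object whose identity lies
in `β`) and let `μ` be its class. If `t ∘ s` lies in a class `ν`, the fiber over `t` of
`ν × σ⁻¹` is nonempty, hence so is the fiber over `g₀`; the element of `σ` it produces ends at
the source of `g₀`, so it is `f₀`, and `ν` contains `g₀ ∘ f₀`. Thus all composites lie in `μ`,
which gives `p^μ_{τσ} = 1` and `p^{μ'}_{τσ} = 0` for `μ' ≠ μ`; the sources and targets of `μ`
are those of `σ` and `τ`, so `μ ∈ _αS_γ`.
-/

section Category

variable {C : Type u} [Category.{v} C]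

lemma mk3_inj {x y x' y' : C} {f : x ⟶ y} {f' : x' ⟶ y'} (h : mk3 f = mk3 f') :
    x = x' ∧ y = y' ∧ HEq f f' := by
  cases h
  exact ⟨rfl, rfl, HEq.rfl⟩

lemma IsComp.src_eq {a b m : Mor C} (h : IsComp a b m) : b.src = m.src := by
  obtain ⟨_, _, _, _, _, rfl, rfl, rfl⟩ := h
  rfl

lemma IsComp.tgt_eq {a b m : Mor C} (h : IsComp a b m) : a.tgt = m.tgt := by
  obtain ⟨_, _, _, _, _, rfl, rfl, rfl⟩ := h
  rfl

lemma IsComp.tgt_eq_src {a b m : Mor C} (h : IsComp a b m) : b.tgt = a.src := by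
  obtain ⟨_, _, _, _, _, rfl, rfl, rfl⟩ := h
  rfl

lemma IsComp.unique {a b m m' : Mor C} (h : IsComp a b m) (h' : IsComp a b m') : m = m' := by
  obtain ⟨_, _, _, f, g, rfl, rfl, rfl⟩ := h
  obtain ⟨_, _, _, f', g', hf, hg, rfl⟩ := h'
  obtain ⟨rfl, rfl, hf⟩ := mk3_inj hf
  obtain ⟨-, rfl, hg⟩ := mk3_inj hg
  rw [eq_of_heq hf, eq_of_heq hg]

lemma exists_isComp {a b : Mor C} (h : b.tgt = a.src) : ∃ m, IsComp a b m := by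
  obtain ⟨x, y, f⟩ := b
  obtain ⟨y', z, g⟩ := a
  obtain rfl : y = y' := h
  exact ⟨mk3 (f ≫ g), x, y, z, f, g, rfl, rfl, rfl⟩

lemma isComp_idMor_src (m : Mor C) : IsComp m (idMor m.src) m :=
  ⟨m.1, m.1, m.2.1, 𝟙 _, m.2.2, rfl, rfl, by rw [Category.id_comp]; rfl⟩

lemma isComp_idMor_tgt (m : Mor C) : IsComp (idMor m.tgt) m m :=
  ⟨m.1, m.2.1, m.2.1, m.2.2, 𝟙 _, rfl, rfl, by rw [Category.comp_id]; rfl⟩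

lemma IsComp.eq_of_mem_J0_right {a b m : Mor C} (hb : b ∈ J0 C) (h : IsComp a b m) :
    a = m ∧ b = idMor m.src := by
  obtain ⟨w, rfl⟩ := hb
  obtain ⟨_, _, _, f, g, hf, rfl, rfl⟩ := h
  obtain ⟨rfl, rfl, hf⟩ := mk3_inj hf
  obtain rfl := eq_of_heq hf
  exact ⟨by rw [Category.id_comp], rfl⟩

lemma IsComp.eq_of_mem_J0_left {a b m : Mor C} (ha : a ∈ J0 C) (h : IsComp a b m) :
    b = m ∧ a = idMor m.tgt := by
  obtain ⟨w, rfl⟩ := ha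
  obtain ⟨_, _, _, f, g, rfl, hg, rfl⟩ := h
  obtain ⟨rfl, rfl, hg⟩ := mk3_inj hg
  obtain rfl := eq_of_heq hg
  exact ⟨by rw [Category.comp_id], rfl⟩

lemma compFiber_subsingleton_of_subset_J0_right {δ ε : Set (Mor C)} (hε : ε ⊆ J0 C)
    (m : Mor C) :
    (compFiber δ ε m).Subsingleton := by
  rintro ⟨a, b⟩ ⟨-, hb, hab⟩ ⟨a', b'⟩ ⟨-, hb', hab'⟩
  obtain ⟨ha, hb⟩ := hab.eq_of_mem_J0_right (hε hb)
  obtain ⟨ha', hb'⟩ := hab'.eq_of_mem_J0_right (hε hb')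
  exact Prod.ext (ha.trans ha'.symm) (hb.trans hb'.symm)

lemma compFiber_subsingleton_of_subset_J0_left {δ ε : Set (Mor C)} (hε : ε ⊆ J0 C)
    (m : Mor C) :
    (compFiber ε δ m).Subsingleton := by
  rintro ⟨a, b⟩ ⟨ha, -, hab⟩ ⟨a', b'⟩ ⟨ha', -, hab'⟩
  obtain ⟨hb, ha⟩ := hab.eq_of_mem_J0_left (hε ha)
  obtain ⟨hb', ha'⟩ := hab'.eq_of_mem_J0_left (hε ha')
  exact Prod.ext (ha.trans ha'.symm) (hb.trans hb'.symm)

lemma structEq_one_iff_of_subsingleton {τ σ μ : Set (Mor C)}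
    (h : ∀ m ∈ μ, (compFiber τ σ m).Subsingleton) :
    structEq τ σ μ 1 ↔ ∀ m ∈ μ, (compFiber τ σ m).Nonempty := by
  refine forall₂_congr fun m hm => ?_
  have := (h m hm).coe_sort
  rw [Nat.card_eq_one_iff_unique, Set.nonempty_coe_sort]
  exact and_iff_right this

lemma structEq_self_right_iff {δ ε : Set (Mor C)} (hε : ε ⊆ J0 C) :
    structEq δ ε δ 1 ↔ ∀ m ∈ δ, idMor m.src ∈ ε := by
  rw [structEq_one_iff_of_subsingleton fun m _ => compFiber_subsingleton_of_subset_J0_right hε m]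
  refine forall₂_congr fun m hm => ⟨?_, fun h => ⟨(m, _), hm, h, isComp_idMor_src m⟩⟩
  rintro ⟨⟨a, b⟩, -, hb, hab⟩
  rwa [← (hab.eq_of_mem_J0_right (hε hb)).2]

lemma structEq_self_left_iff {δ ε : Set (Mor C)} (hε : ε ⊆ J0 C) :
    structEq ε δ δ 1 ↔ ∀ m ∈ δ, idMor m.tgt ∈ ε := by
  rw [structEq_one_iff_of_subsingleton fun m _ => compFiber_subsingleton_of_subset_J0_left hε m]
  refine forall₂_congr fun m hm => ⟨?_, fun h => ⟨(_, m), h, hm, isComp_idMor_tgt m⟩⟩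
  rintro ⟨⟨a, b⟩, ha, -, hab⟩
  rwa [← (hab.eq_of_mem_J0_left (hε ha)).2]

lemma mem_hom2_of_forall_compFiber_nonempty {S : Set (Set (Mor C))} {α β γ σ τ μ : Set (Mor C)}
    (hα : α ⊆ J0 C) (hγ : γ ⊆ J0 C) (hσ : σ ∈ hom2 S α β) (hτ : τ ∈ hom2 S β γ) (hμ : μ ∈ S)
    (hfac : ∀ m ∈ μ, (compFiber τ σ m).Nonempty) : μ ∈ hom2 S α γ := by
  refine ⟨hμ, (structEq_self_right_iff hα).2 fun m hm => ?_,
    (structEq_self_left_iff hγ).2 fun m hm => ?_⟩ <;>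
  obtain ⟨⟨t, s⟩, ht, hs, hts⟩ := hfac m hm
  · rw [← hts.src_eq]
    exact (structEq_self_right_iff hα).1 hσ.2.1 s hs
  · rw [← hts.tgt_eq]
    exact (structEq_self_left_iff hγ).1 hτ.2.2 t ht

end Category

section Groupoid

variable {C : Type u} [Groupoid.{v} C]

lemma morInv_morInv (m : Mor C) : morInv (morInv m) = m := by
  obtain ⟨x, y, f⟩ := m
  simp only [morInv, Groupoid.inv_eq_inv, IsIso.inv_inv]
  rfl

lemma isComp_morInv_self (m : Mor C) : IsComp (morInv m) m (idMor m.src) :=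
  ⟨m.1, m.2.1, m.1, m.2.2, Groupoid.inv m.2.2, rfl, rfl, by rw [Groupoid.comp_inv]; rfl⟩

lemma IsComp.morInv_right {a b m : Mor C} (h : IsComp a b m) : IsComp m (morInv b) a := by
  obtain ⟨x, y, z, f, g, rfl, rfl, rfl⟩ := h
  exact ⟨y, x, z, Groupoid.inv f, f ≫ g, rfl, rfl, 
    by rw [← Category.assoc, Groupoid.inv_comp, Category.id_comp]⟩

lemma isComp_morInv_right_iff {a b m : Mor C} : IsComp m (morInv b) a ↔ IsComp a b m :=
  ⟨fun h => morInv_morInv b ▸ h.morInv_right, IsComp.morInv_right⟩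

lemma IsComp.cancel_inner {a a' b m : Mor C} (h : IsComp a b m) (h' : IsComp a' b m) :
    a = a' := by
  obtain ⟨_, _, _, f, g, rfl, rfl, rfl⟩ := h
  obtain ⟨_, _, _, f', g', hf, rfl, hm⟩ := h'
  obtain ⟨rfl, rfl, hf⟩ := mk3_inj hf
  obtain rfl := eq_of_heq hf
  obtain ⟨-, rfl, hm⟩ := mk3_inj hm
  rw [cancel_epi f |>.1 (eq_of_heq hm)]

end Groupoid

lemma QuasiSchemoid.IsUnital.subset_J0 {C : Type u} [Category.{v} C] {Q : QuasiSchemoid C}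
    (hQ : Q.IsUnital) {α : Set (Mor C)} (hα : α ∈ S0 Q.part) : α ⊆ J0 C := by
  obtain ⟨hαQ, x, hx⟩ := hα
  exact hQ α hαQ ⟨idMor x, hx, x, rfl⟩

lemma QuasiSchemoid.compFiber_nonempty_iff {C : Type u} [Category.{v} C] (Q : QuasiSchemoid C)
    {σ τ μ : Set (Mor C)} (hσ : σ ∈ Q.part) (hτ : τ ∈ Q.part) (hμ : μ ∈ Q.part)
    {f g : Mor C} (hf : f ∈ μ) (hg : g ∈ μ) :
    (compFiber σ τ f).Nonempty ↔ (compFiber σ τ g).Nonempty := by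
  obtain ⟨e⟩ := Q.concat σ hσ τ hτ μ hμ f hf g hg
  simpa only [Set.nonempty_coe_sort] using e.nonempty_congr

section Partition

variable {C : Type u} [Category.{v} C] {S : Set (Set (Mor C))} {σ τ μ μ' : Set (Mor C)}

lemma eq_of_compFiber_nonempty (hS : Setoid.IsPartition S) (hμ : μ ∈ S) (hμ' : μ' ∈ S)
    (hcomp : ∀ t ∈ τ, ∀ s ∈ σ, ∀ m, IsComp t s m → m ∈ μ) {m : Mor C} (hm : m ∈ μ')
    (hfib : (compFiber τ σ m).Nonempty) : μ' = μ := by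
  obtain ⟨⟨t, s⟩, ht, hs, h⟩ := hfib
  exact Setoid.eq_of_mem_eqv_class hS.2 hμ' hm hμ (hcomp t ht s hs m h)

lemma eq_of_structEq_one (hS : Setoid.IsPartition S) (hμ : μ ∈ S) (hμ' : μ' ∈ S)
    (hcomp : ∀ t ∈ τ, ∀ s ∈ σ, ∀ m, IsComp t s m → m ∈ μ) (h : structEq τ σ μ' 1) : μ' = μ := by
  obtain ⟨m, hm⟩ := Setoid.nonempty_of_mem_partition hS hμ'
  have := (Nat.card_eq_one_iff_unique.1 (h m hm)).2
  exact eq_of_compFiber_nonempty hS hμ hμ' hcomp hm (Set.nonempty_coe_sort.1 this)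

lemma structEq_zero_of_ne (hS : Setoid.IsPartition S) (hμ : μ ∈ S) (hμ' : μ' ∈ S)
    (hcomp : ∀ t ∈ τ, ∀ s ∈ σ, ∀ m, IsComp t s m → m ∈ μ) (hne : μ' ≠ μ) :
    structEq τ σ μ' 0 := fun m hm => by
  have := Set.not_nonempty_iff_eq_empty.1 fun hfib =>
    hne (eq_of_compFiber_nonempty hS hμ hμ' hcomp hm hfib)
  rw [this, Nat.card_of_isEmpty]

end Partition

namespace AssnSchemoid

variable {C : Type u} [Groupoid.{v} C] (A : AssnSchemoid C)

lemma morInv_image_mem (hT : ∀ m, A.T.onMor m = morInv m) {δ : Set (Mor C)} (hδ : δ ∈ A.part) :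
    morInv '' δ ∈ A.part := by
  simpa only [funext hT] using A.T_part δ hδ

lemma exists_mem_src_eq (hT : ∀ m, A.T.onMor m = morInv m) {β τ : Set (Mor C)} (hβ : β ∈ A.part)
    (hτ : τ ∈ A.part) {g : Mor C} (hg : g ∈ τ) (hgβ : idMor g.src ∈ β) {x : C}
    (hx : idMor x ∈ β) : ∃ t ∈ τ, t.src = x := by
  have hfib : (compFiber (morInv '' τ) τ (idMor g.src)).Nonempty :=
    ⟨(morInv g, g), ⟨g, hg, rfl⟩, hg, isComp_morInv_self g⟩
  obtain ⟨⟨_, t⟩, -, ht, h⟩ :=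
    (A.compFiber_nonempty_iff (A.morInv_image_mem hT hτ) hτ hβ hgβ hx).1 hfib
  exact ⟨t, ht, h.src_eq⟩

end AssnSchemoid

namespace IsSemiThin

variable {C : Type u} [Groupoid.{v} C] {A : AssnSchemoid C}

lemma eq_of_src_eq (hst : IsSemiThin A) {δ : Set (Mor C)} (hδ : δ ∈ A.part) {p q : Mor C}
    (hp : p ∈ δ) (hq : q ∈ δ) (h : p.src = q.src) : p = q :=
  hst.2.1 δ hδ q.src ⟨hp, h⟩ ⟨hq, rfl⟩

lemma eq_of_tgt_eq (hst : IsSemiThin A) {δ : Set (Mor C)} (hδ : δ ∈ A.part) {p q : Mor C}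
    (hp : p ∈ δ) (hq : q ∈ δ) (h : p.tgt = q.tgt) : p = q := by
  have := hst.eq_of_src_eq (A.morInv_image_mem hst.2.2 hδ) ⟨p, hp, rfl⟩ ⟨q, hq, rfl⟩ h
  rw [← morInv_morInv p, this, morInv_morInv]

lemma compFiber_subsingleton (hst : IsSemiThin A) {σ : Set (Mor C)} (hσ : σ ∈ A.part)
    (τ : Set (Mor C)) (m : Mor C) : (compFiber τ σ m).Subsingleton := by
  rintro ⟨a, b⟩ ⟨-, hb, hab : IsComp a b m⟩ ⟨a', b'⟩ ⟨-, hb', hab' : IsComp a' b' m⟩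
  obtain rfl : b = b' := hst.eq_of_src_eq hσ hb hb' (hab.src_eq.trans hab'.src_eq.symm)
  rw [hab.cancel_inner hab']

lemma mem_of_isComp (hst : IsSemiThin A) {σ τ μ : Set (Mor C)} (hσ : σ ∈ A.part)
    (hτ : τ ∈ A.part) (hμ : μ ∈ A.part) {f₀ g₀ m₀ : Mor C} (hf₀ : f₀ ∈ σ) (hg₀ : g₀ ∈ τ)
    (h₀ : IsComp g₀ f₀ m₀) (hm₀ : m₀ ∈ μ) {s t m : Mor C} (ht : t ∈ τ) (hs : s ∈ σ)
    (h : IsComp t s m) : m ∈ μ := by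
  obtain ⟨ν, hν, hmν⟩ := (A.isPartition.2 m).exists
  have hfib : (compFiber ν (morInv '' σ) t).Nonempty :=
    ⟨(m, morInv s), hmν, ⟨s, hs, rfl⟩, h.morInv_right⟩
  obtain ⟨⟨a, -⟩, haν, ⟨b, hb, rfl⟩, hab⟩ :=
    (A.compFiber_nonempty_iff hν (A.morInv_image_mem hst.2.2 hσ) hτ ht hg₀).1 hfib
  obtain rfl : b = f₀ := hst.eq_of_tgt_eq hσ hb hf₀ (hab.src_eq.trans h₀.tgt_eq_src.symm)
  obtain rfl : a = m₀ := (isComp_morInv_right_iff.1 hab).unique h₀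
  rwa [Setoid.eq_of_mem_eqv_class A.isPartition.2 hν haν hμ hm₀] at hmν

end IsSemiThin

/-- Lemma 4.4 of Kuribayashi–Matsuo: in a semi-thin association schemoid, for
`σ ∈ _αS_β` and `τ ∈ _βS_γ` there is a unique `μ ∈ _αS_γ` with `p^μ_{τσ} = 1`, and
`p^{μ'}_{τσ} = 0` for every other class `μ'`. -/
theorem semiThin_unique_composition_class
    {C : Type u} [Groupoid.{v} C] (A : AssnSchemoid C) (hst : IsSemiThin A)
    {α β γ : Set (Mor C)} (hα : α ∈ S0 A.part) (hβ : β ∈ S0 A.part) (hγ : γ ∈ S0 A.part)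
    {σ τ : Set (Mor C)} (hσ : σ ∈ hom2 A.part α β) (hτ : τ ∈ hom2 A.part β γ) :
    ∃ μ ∈ hom2 A.part α γ, structEq τ σ μ 1 ∧
      (∀ μ'' ∈ hom2 A.part α γ, structEq τ σ μ'' 1 → μ'' = μ) ∧
      (∀ μ' ∈ A.part, μ' ≠ μ → structEq τ σ μ' 0) := by
  have hP := A.isPartition
  have hβJ := hst.1.subset_J0 hβ
  obtain ⟨f₀, hf₀⟩ := Setoid.nonempty_of_mem_partition hP hσ.1
  obtain ⟨g₀, hg₀, hfg⟩ : ∃ g ∈ τ, g.src = f₀.tgt := by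
    obtain ⟨g, hg⟩ := Setoid.nonempty_of_mem_partition hP hτ.1
    exact A.exists_mem_src_eq hst.2.2 hβ.1 hτ.1 hg ((structEq_self_right_iff hβJ).1 hτ.2.1 g hg)
      ((structEq_self_left_iff hβJ).1 hσ.2.2 f₀ hf₀)
  obtain ⟨m₀, h₀⟩ := exists_isComp hfg.symm
  obtain ⟨μ, hμ, hm₀⟩ := (hP.2 m₀).exists
  have hcomp : ∀ t ∈ τ, ∀ s ∈ σ, ∀ m, IsComp t s m → m ∈ μ := fun _ ht _ hs _ h =>
    hst.mem_of_isComp hσ.1 hτ.1 hμ hf₀ hg₀ h₀ hm₀ ht hs h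
  have hfac : ∀ m ∈ μ, (compFiber τ σ m).Nonempty := fun _ hm =>
    (A.compFiber_nonempty_iff hτ.1 hσ.1 hμ hm₀ hm).1 ⟨(g₀, f₀), hg₀, hf₀, h₀⟩
  refine ⟨μ, ?_, ?_, fun μ'' hμ'' => eq_of_structEq_one hP hμ hμ''.1 hcomp,
    fun μ' hμ' => structEq_zero_of_ne hP hμ hμ' hcomp⟩
  · exact mem_hom2_of_forall_compFiber_nonempty (hst.1.subset_J0 hα) (hst.1.subset_J0 hγ)
      hσ hτ hμ hfac
  · exact (structEq_one_iff_of_subsingleton fun m _ =>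
      hst.compFiber_subsingleton hσ.1 τ m).2 hfac
end

section
/- Let (C,S,T) be a semi-thin association schemoid, α, β, γ ∈ S₀, σ ∈ _αS_β and τ ∈ _βS_γ, and let τ∘σ denote the unique element μ of _αS_γ with p^μ_{τσ} = 1. If f ∈ σ, g ∈ τ and t(f) = s(g), then g∘f ∈ τ∘σ. -/
open CategoryTheory

universe v u

universe v₂ u₂

namespace IsComp

variable {C : Type u}

theorem src_eq_s7 [Category.{v} C] {a b m : Mor C} (h : IsComp a b m) : b.src = m.src := by
  obtain ⟨x, y, z, f, g, rfl, rfl, rfl⟩ := h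
  rfl

theorem right_unique [Category.{v} C] {a b m m' : Mor C} (h : IsComp a b m)
    (h' : IsComp a b m') : m = m' := by
  obtain ⟨x, y, z, f, g, rfl, rfl, rfl⟩ := h
  obtain ⟨x', y', z', f', g', hb, ha, rfl⟩ := h'
  cases hb
  cases ha
  rfl

theorem inv_right [Groupoid.{v} C] {a b m : Mor C} (h : IsComp a b m) :
    IsComp m (morInv b) a := by
  obtain ⟨x, y, z, f, g, rfl, rfl, rfl⟩ := h
  refine ⟨y, x, z, Groupoid.inv f, f ≫ g, rfl, rfl, ?_⟩
  rw [← Category.assoc, Groupoid.inv_comp, Category.id_comp]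

theorem left_cancel [Groupoid.{v} C] {a a' b m : Mor C} (h : IsComp a b m)
    (h' : IsComp a' b m) : a = a' :=
  h.inv_right.right_unique h'.inv_right

end IsComp

theorem structEq.nonempty_compFiber {C : Type u} [Category.{v} C] {τ σ μ : Set (Mor C)}
    {n : ℕ} (h : structEq τ σ μ n) (hn : n ≠ 0) {m : Mor C} (hm : m ∈ μ) :
    (compFiber τ σ m).Nonempty :=
  Set.nonempty_coe_sort.mp (Nat.card_ne_zero.mp (h m hm ▸ hn)).1

theorem QuasiSchemoid.nonempty_compFiber_of_mem {C : Type u} [Category.{v} C]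
    (Q : QuasiSchemoid C) {σ τ μ : Set (Mor C)} (hσ : σ ∈ Q.part) (hτ : τ ∈ Q.part)
    (hμ : μ ∈ Q.part) {m m' : Mor C} (hm : m ∈ μ) (hm' : m' ∈ μ)
    (hne : (compFiber σ τ m).Nonempty) : (compFiber σ τ m').Nonempty := by
  obtain ⟨e⟩ := Q.concat σ hσ τ hτ μ hμ m hm m' hm'
  exact ⟨_, (e ⟨_, hne.some_mem⟩).2⟩

/- Writing `m₀ = g₀ ∘ f₀`, the morphism `g₀ = m₀ ∘ f₀⁻¹` factors through `μ` and `σ* = σ⁻¹`, hence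
so does `g` by the concatenation axiom, say `g = a ∘ b`. Semi-thinness forces `b = f⁻¹`, so
`a = g ∘ f`. -/
theorem IsSemiThin.mem_of_isComp_s7 {C : Type u} [Groupoid.{v} C] {A : AssnSchemoid C}
    (hst : IsSemiThin A) {σ τ μ : Set (Mor C)} (hσ : σ ∈ A.part) (hτ : τ ∈ A.part)
    (hμ : μ ∈ A.part) {m₀ : Mor C} (hm₀ : m₀ ∈ μ) (hne : (compFiber τ σ m₀).Nonempty)
    {f g m : Mor C} (hf : f ∈ σ) (hg : g ∈ τ) (hm : IsComp g f m) : m ∈ μ := by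
  have hσ' : A.T.onMor '' σ ∈ A.part := A.T_part σ hσ
  have inv_mem : ∀ {h}, h ∈ σ → morInv h ∈ A.T.onMor '' σ := fun hh =>
    hst.2.2 _ ▸ Set.mem_image_of_mem _ hh
  obtain ⟨⟨g₀, f₀⟩, hg₀, hf₀, hm₀comp⟩ := hne
  obtain ⟨⟨a, b⟩, ha, hb, hab⟩ := A.nonempty_compFiber_of_mem hμ hσ' hτ hg₀ hg
    ⟨(m₀, morInv f₀), hm₀, inv_mem hf₀, hm₀comp.inv_right⟩
  obtain rfl : b = morInv f :=
    hst.2.1 _ hσ' g.src ⟨hb, hab.src_eq_s7⟩ ⟨inv_mem hf, hm.inv_right.src_eq_s7⟩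
  exact hab.left_cancel hm.inv_right ▸ ha

theorem comp_mem_composition_class_general
    {C : Type u} [Groupoid.{v} C] (A : AssnSchemoid C) (hst : IsSemiThin A)
    {α β γ σ τ μ : Set (Mor C)}
    (hσ : σ ∈ hom2 A.part α β) (hτ : τ ∈ hom2 A.part β γ)
    (hμ : μ ∈ hom2 A.part α γ) (hμ1 : structEq τ σ μ 1)
    (f g : Mor C) (hf : f ∈ σ) (hg : g ∈ τ) :
    ∀ m : Mor C, IsComp g f m → m ∈ μ := by
  intro m hm
  obtain ⟨m₀, hm₀⟩ := Setoid.nonempty_of_mem_partition A.isPartition hμ.1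
  exact hst.mem_of_isComp_s7 hσ.1 hτ.1 hμ.1 hm₀ (hμ1.nonempty_compFiber one_ne_zero hm₀) hf hg hm

/-- Lemma 4.5 of Kuribayashi–Matsuo: if `σ ∈ _αS_β`, `τ ∈ _βS_γ`, `f ∈ σ`, `g ∈ τ` and
`t(f) = s(g)`, then `g ∘ f` lies in the class `τ∘σ`, i.e. in the unique `μ ∈ _αS_γ`
with `p^μ_{τσ} = 1`. -/
theorem comp_mem_composition_class
    {C : Type u} [Groupoid.{v} C] (A : AssnSchemoid C) (hst : IsSemiThin A)
    {α β γ σ τ μ : Set (Mor C)} (hα : α ∈ S0 A.part) (hβ : β ∈ S0 A.part)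
    (hγ : γ ∈ S0 A.part)
    (hσ : σ ∈ hom2 A.part α β) (hτ : τ ∈ hom2 A.part β γ)
    (hμ : μ ∈ hom2 A.part α γ) (hμ1 : structEq τ σ μ 1)
    (f g : Mor C) (hf : f ∈ σ) (hg : g ∈ τ) (hcomp : Mor.tgt f = Mor.src g) :
    ∀ m : Mor C, IsComp g f m → m ∈ μ :=
  comp_mem_composition_class_general A hst hσ hτ hμ hμ1 f g hf hg
end

section
/- Let D₊ → E →(q) C be a linear extension of a small category C and let (C,S) be a quasi-schemoid. Assume that for every morphism f in C the homomorphisms f_* and f^* are invertible, and that D_{1_{s(f)}} ≅ D_{1_{s(g)}} for every σ ∈ S and all f, g ∈ σ. Then E admits a unique quasi-schemoid structure (E,S̃) for which q is a morphism of quasi-schemoids that is injective on the partition of mor(E); namely S̃ = {q⁻¹(σ)}_{σ ∈ S}. -/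
open CategoryTheory

universe v u

universe v₂ u₂

/-- The category of factorizations `F(C)` : objects are the morphisms of `C`, and a
morphism `f → g` is a pair `(α,β)` with `α ∘ f ∘ β = g`. -/
def FactCat (C : Type u) [Category.{v} C] : Type max u v := Mor C

/-- Reinterpret an element of `Mor C` as an object of `F(C)`. -/
def toFactCat {C : Type u} [Category.{v} C] (m : Mor C) : FactCat C := m

/-- Reinterpret an object of `F(C)` as an element of `Mor C`. -/
def FactCat.toMor {C : Type u} [Category.{v} C] (m : FactCat C) : Mor C := m

instance FactCat.category (C : Type u) [Category.{v} C] : Category (FactCat C) where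
  Hom f g :=
    {p : (g.toMor.1 ⟶ f.toMor.1) × (f.toMor.2.1 ⟶ g.toMor.2.1) //
      p.1 ≫ f.toMor.2.2 ≫ p.2 = g.toMor.2.2}
  id f := ⟨(𝟙 _, 𝟙 _), by simp⟩
  comp {f g h} p q := ⟨(q.1.1 ≫ p.1.1, p.1.2 ≫ q.1.2), by
    calc (q.1.1 ≫ p.1.1) ≫ f.toMor.2.2 ≫ (p.1.2 ≫ q.1.2)
        = q.1.1 ≫ (p.1.1 ≫ f.toMor.2.2 ≫ p.1.2) ≫ q.1.2 := by simp
      _ = q.1.1 ≫ g.toMor.2.2 ≫ q.1.2 := by rw [p.2]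
      _ = h.toMor.2.2 := q.2⟩
  id_comp p := by apply Subtype.ext; simp
  comp_id p := by apply Subtype.ext; simp
  assoc p q r := by apply Subtype.ext; simp

/-- The abelian group `D_m` associated by a natural system `N : F(C) → Ab` to a
morphism `m`. -/
def elN {C : Type u} [Category.{v} C] (N : FactCat C ⥤ AddCommGrpCat.{w}) (m : Mor C) :
    Type w :=
  N.obj (toFactCat m)

noncomputable instance elN.addCommGroup {C : Type u} [Category.{v} C]
    (N : FactCat C ⥤ AddCommGrpCat.{w}) (m : Mor C) : AddCommGroup (elN N m) :=
  inferInstanceAs (AddCommGroup (N.obj (toFactCat m)))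

/-- The morphism `(f, 1) : g → g ≫ f` of `F(C)` inducing `f_*`. -/
def factPushHom {C : Type u} [Category.{v} C] {x y z : C} (g : x ⟶ y) (f : y ⟶ z) :
    toFactCat (mk3 g) ⟶ toFactCat (mk3 (g ≫ f)) :=
  ⟨(𝟙 x, f), by simp [toFactCat, FactCat.toMor, mk3]⟩

/-- The morphism `(1, g) : f → g ≫ f` of `F(C)` inducing `g^*`. -/
def factPullHom {C : Type u} [Category.{v} C] {x y z : C} (g : x ⟶ y) (f : y ⟶ z) :
    toFactCat (mk3 f) ⟶ toFactCat (mk3 (g ≫ f)) :=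
  ⟨(g, 𝟙 z), by simp [toFactCat, FactCat.toMor, mk3]⟩

/-- `f_* : D_g → D_{f∘g}` (post-composition by `f`). -/
def fpush {C : Type u} [Category.{v} C] (N : FactCat C ⥤ AddCommGrpCat.{w}) {x y z : C}
    (g : x ⟶ y) (f : y ⟶ z) : elN N (mk3 g) → elN N (mk3 (g ≫ f)) :=
  fun a => N.map (factPushHom g f) a

/-- `g^* : D_f → D_{f∘g}` (pre-composition by `g`). -/
def fpull {C : Type u} [Category.{v} C] (N : FactCat C ⥤ AddCommGrpCat.{w}) {x y z : C}
    (g : x ⟶ y) (f : y ⟶ z) : elN N (mk3 f) → elN N (mk3 (g ≫ f)) :=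
  fun a => N.map (factPullHom g f) a

/-- Transport in the coefficients of a natural system along an equality of morphisms. -/
def elCast {C : Type u} [Category.{v} C] (N : FactCat C ⥤ AddCommGrpCat.{w}) {x y : C}
    {f g : x ⟶ y} (h : f = g) (a : elN N (mk3 f)) : elN N (mk3 g) := by
  subst h; exact a

/-- A linear extension `D₊ → E → C` of a small category `C` by a natural system
`N : F(C) → Ab` (Definition 5.1 of Kuribayashi–Matsuo, after Baues–Wirsching):
`E` has the same objects as `C`, `q` is a full functor which is the identity on
objects, each `D_f` acts transitively and effectively on `q⁻¹(f)`, and the linear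
distributivity law holds. -/
structure LinExt (C : Type u) [Category.{v} C]
    (N : FactCat C ⥤ AddCommGrpCat.{w}) where
  hom : C → C → Type w
  id' : ∀ x : C, hom x x
  comp' : ∀ {x y z : C}, hom x y → hom y z → hom x z
  id_comp' : ∀ {x y : C} (e : hom x y), comp' (id' x) e = e
  comp_id' : ∀ {x y : C} (e : hom x y), comp' e (id' y) = e
  assoc' : ∀ {w x y z : C} (a : hom w x) (b : hom x y) (c : hom y z),
    comp' (comp' a b) c = comp' a (comp' b c)
  /-- the projection `q`, identity on objects -/
  q : ∀ {x y : C}, hom x y → (x ⟶ y)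
  q_id : ∀ x : C, q (id' x) = 𝟙 x
  q_comp : ∀ {x y z : C} (e : hom x y) (e' : hom y z), q (comp' e e') = q e ≫ q e'
  /-- `q` is full -/
  q_surj : ∀ {x y : C} (f : x ⟶ y), ∃ e : hom x y, q e = f
  /-- the action of `D_f` on `q⁻¹(f)`, written `e + a` -/
  act : ∀ {x y : C} (e : hom x y), elN N (mk3 (q e)) → hom x y
  act_q : ∀ {x y : C} (e : hom x y) (a : elN N (mk3 (q e))), q (act e a) = q e
  act_zero : ∀ {x y : C} (e : hom x y), act e 0 = e
  act_add : ∀ {x y : C} (e : hom x y) (a b : elN N (mk3 (q e))),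
    act (act e a) (elCast N (act_q e a).symm b) = act e (a + b)
  /-- transitivity of the action on fibers of `q` -/
  act_trans : ∀ {x y : C} (e e' : hom x y) (h : q e = q e'),
    ∃ a : elN N (mk3 (q e)), act e a = e'
  /-- effectiveness (freeness) of the action -/
  act_free : ∀ {x y : C} (e : hom x y) (a : elN N (mk3 (q e))), act e a = e → a = 0
  /-- the linear distributivity law `(f₀+α)(g₀+β) = f₀g₀ + f_*β + g^*α` -/
  distrib : ∀ {x y z : C} (g₀ : hom x y) (f₀ : hom y z)
    (β : elN N (mk3 (q g₀))) (α : elN N (mk3 (q f₀))),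
    comp' (act g₀ β) (act f₀ α) =
      act (comp' g₀ f₀)
        (elCast N (q_comp g₀ f₀).symm
          (fpush N (q g₀) (q f₀) β + fpull N (q g₀) (q f₀) α))

/-- The total category `E` of a linear extension. -/
def LinExt.Carrier {C : Type u} [Category.{v} C]
    {N : FactCat C ⥤ AddCommGrpCat.{w}} (_ : LinExt C N) : Type u := C

instance LinExt.category {C : Type u} [Category.{v} C]
    {N : FactCat C ⥤ AddCommGrpCat.{w}} (L : LinExt C N) : Category L.Carrier where
  Hom x y := L.hom x y
  id x := L.id' x
  comp e e' := L.comp' e e'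
  id_comp e := L.id_comp' e
  comp_id e := L.comp_id' e
  assoc a b c := L.assoc' a b c

/-- The projection functor `q : E ⥤ C` of a linear extension. -/
def LinExt.qFunctor {C : Type u} [Category.{v} C]
    {N : FactCat C ⥤ AddCommGrpCat.{w}} (L : LinExt C N) : L.Carrier ⥤ C where
  obj x := x
  map e := L.q e
  map_id x := L.q_id x
  map_comp e e' := L.q_comp e e'

/-- The partition `S̃ = {q⁻¹(σ)}_{σ ∈ S}` of `mor E`. -/
def preimagePart {C : Type u} [Category.{v} C] {N : FactCat C ⥤ AddCommGrpCat.{w}}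
    (L : LinExt C N) (S : Set (Set (Mor C))) : Set (Set (Mor L.Carrier)) :=
  {s | ∃ σ ∈ S, s = morMap L.qFunctor ⁻¹' σ}

/-- A proper morphism of quasi-schemoids: a morphism which is injective on the
partitions. -/
def IsProperQSMor {C : Type u} {D : Type u₂} [Category.{v} C] [Category.{v₂} D]
    (SC : Set (Set (Mor C))) (SD : Set (Set (Mor D))) (F : C ⥤ D) : Prop :=
  IsQSMor SC SD F ∧
    ∀ σ₁ ∈ SC, ∀ σ₂ ∈ SC, ∀ τ ∈ SD,
      morMap F '' σ₁ ⊆ τ → morMap F '' σ₂ ⊆ τ → σ₁ = σ₂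

/-! Since `q` is full and the identity on objects, it is surjective on morphisms, so the
preimages of the classes of `S` partition `mor E`, and `q` is proper for that partition. Any
partition for which `q` is proper has each class inside the preimage of a class of `S`, and
properness forces equality.

For the concatenation axiom, fix a morphism `e` of `E` and a factorization `q e = a ∘ b` with
`a ∈ σ`, `b ∈ τ`. If `v₀ ∘ u₀ = e` is one lift, every lift is `(v₀ + α) ∘ (u₀ + β)`, and by the
linear distributivity law it composes to `e` exactly when `a_* β + b^* α = 0`; as `a_*` is
invertible, these lifts correspond to `α ∈ D_a`. So the fibre of `π_{q⁻¹σ, q⁻¹τ}` over `e` is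
`Σ_{(a,b)} D_a`, and `D_a ≅ D_{1_{s(a)}}` (via `a_*`) is, up to bijection, the same for all
`a ∈ σ`. The fibre sizes in `C` being constant on classes, so are those in `E`.
-/

namespace Setoid.IsPartition

variable {α β : Type*} {S : Set (Set β)}

theorem preimage {f : α → β} (hf : Function.Surjective f) (hS : IsPartition S) :
    IsPartition {s | ∃ σ ∈ S, s = f ⁻¹' σ} := by
  refine ⟨?_, fun a => ?_⟩
  · rintro ⟨σ, hσ, hempty⟩
    obtain ⟨b, hb⟩ := nonempty_of_mem_partition hS hσ
    obtain ⟨a, rfl⟩ := hf b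
    exact Set.notMem_empty a (hempty ▸ hb)
  · obtain ⟨σ, ⟨hσ, haσ⟩, huniq⟩ := hS.2 (f a)
    refine ⟨f ⁻¹' σ, ⟨⟨σ, hσ, rfl⟩, haσ⟩, ?_⟩
    rintro _ ⟨⟨τ, hτ, rfl⟩, haτ⟩
    rw [huniq τ ⟨hτ, haτ⟩]

end Setoid.IsPartition

section

open Setoid

variable {C : Type u} {D : Type u₂} [Category.{v} C] [Category.{v₂} D] {F : C ⥤ D}
  {S : Set (Set (Mor D))}

theorem isProperQSMor_preimage (hF : Function.Surjective (morMap F)) (hS : IsPartition S) :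
    IsProperQSMor {s | ∃ σ ∈ S, s = morMap F ⁻¹' σ} S F := by
  refine ⟨fun _ ⟨σ, hσ, hs⟩ => ⟨σ, hσ, hs ▸ Set.image_preimage_subset _ _⟩, ?_⟩
  rintro _ ⟨σ₁, hσ₁, rfl⟩ _ ⟨σ₂, hσ₂, rfl⟩ τ hτ h₁ h₂
  rw [Set.image_preimage_eq _ hF] at h₁ h₂
  obtain ⟨b₁, hb₁⟩ := nonempty_of_mem_partition hS hσ₁
  obtain ⟨b₂, hb₂⟩ := nonempty_of_mem_partition hS hσ₂
  rw [eq_of_mem_eqv_class hS.2 hσ₁ hb₁ hτ (h₁ hb₁), eq_of_mem_eqv_class hS.2 hσ₂ hb₂ hτ (h₂ hb₂)]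

theorem IsProperQSMor.eq_preimage_of_image_subset {S' : Set (Set (Mor C))}
    (hS : IsPartition S) (hS' : IsPartition S') (h : IsProperQSMor S' S F)
    {s : Set (Mor C)} (hs : s ∈ S') {τ : Set (Mor D)} (hτ : τ ∈ S) (hsτ : morMap F '' s ⊆ τ) :
    s = morMap F ⁻¹' τ := by
  refine (Set.image_subset_iff.1 hsτ).antisymm fun m hm => ?_
  obtain ⟨s', ⟨hs', hms'⟩, -⟩ := hS'.2 m
  obtain ⟨τ', hτ', hs'τ'⟩ := h.1 s' hs'
  obtain rfl := eq_of_mem_eqv_class hS.2 hτ' (hs'τ' ⟨m, hms', rfl⟩) hτ hm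
  rwa [h.2 s hs s' hs' τ' hτ' hsτ hs'τ']

theorem IsProperQSMor.eq_preimage {S' : Set (Set (Mor C))} (hF : Function.Surjective (morMap F))
    (hS : IsPartition S) (hS' : IsPartition S') (h : IsProperQSMor S' S F) :
    S' = {s | ∃ σ ∈ S, s = morMap F ⁻¹' σ} := by
  ext s
  refine ⟨fun hs => ?_, ?_⟩
  · obtain ⟨τ, hτ, hsτ⟩ := h.1 s hs
    exact ⟨τ, hτ, h.eq_preimage_of_image_subset hS hS' hs hτ hsτ⟩
  · rintro ⟨τ, hτ, rfl⟩
    obtain ⟨b, hb⟩ := nonempty_of_mem_partition hS hτ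
    obtain ⟨m, rfl⟩ := hF b
    obtain ⟨s', ⟨hs', hms'⟩, -⟩ := hS'.2 m
    obtain ⟨τ', hτ', hs'τ'⟩ := h.1 s' hs'
    obtain rfl := eq_of_mem_eqv_class hS.2 hτ' (hs'τ' ⟨m, hms', rfl⟩) hτ hb
    rwa [← h.eq_preimage_of_image_subset hS hS' hs' hτ' hs'τ']

end

section

variable {C : Type u} [Category.{v} C]

theorem mk3_eq_mk3_iff {x y x' y' : C} {f : x ⟶ y} {f' : x' ⟶ y'} :
    mk3 f = mk3 f' ↔ x = x' ∧ y = y' ∧ HEq f f' := by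
  refine ⟨fun h => ?_, ?_⟩
  · injection h with hx h
    subst hx
    injection eq_of_heq h with hy h
    exact ⟨rfl, hy, h⟩
  · rintro ⟨rfl, rfl, h⟩
    rw [eq_of_heq h]

def compFiberThrough (σ τ : Set (Mor C)) {x z : C} (h : x ⟶ z) (y : C) :
    Set ((x ⟶ y) × (y ⟶ z)) :=
  {p | mk3 p.2 ∈ σ ∧ mk3 p.1 ∈ τ ∧ p.1 ≫ p.2 = h}

noncomputable def sigmaCompFiberThroughEquiv (σ τ : Set (Mor C)) {x z : C} (h : x ⟶ z) :
    (Σ y, compFiberThrough σ τ h y) ≃ compFiber σ τ (mk3 h) := by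
  refine Equiv.ofBijective (fun p => ⟨(mk3 p.2.1.2, mk3 p.2.1.1), p.2.2.1, p.2.2.2.1,
    x, p.1, z, p.2.1.1, p.2.1.2, rfl, rfl, by rw [p.2.2.2.2]⟩) ⟨?_, ?_⟩
  · rintro ⟨y, ⟨f, g⟩, hfg⟩ ⟨y', ⟨f', g'⟩, hfg'⟩ heq
    obtain ⟨hg, hf⟩ := Prod.mk.inj (congrArg Subtype.val heq)
    obtain ⟨-, rfl, hf⟩ := mk3_eq_mk3_iff.1 hf
    cases eq_of_heq hf
    cases eq_of_heq (mk3_eq_mk3_iff.1 hg).2.2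
    rfl
  · rintro ⟨⟨a, b⟩, hab⟩
    obtain ⟨ha, hb, x', y, z', f, g, hb', ha', hm⟩ := id hab
    obtain ⟨rfl, rfl, hm⟩ := mk3_eq_mk3_iff.1 hm
    refine ⟨⟨y, (f, g), ha' ▸ ha, hb' ▸ hb, (eq_of_heq hm).symm⟩, Subtype.ext ?_⟩
    exact Prod.ext ha'.symm hb'.symm

end

section

variable {C : Type u} [Category.{v} C] {N : FactCat C ⥤ AddCommGrpCat.{w}}

theorem elCast_eq_zero_iff {x y : C} {f g : x ⟶ y} (h : f = g) {a : elN N (mk3 f)} :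
    elCast N h a = 0 ↔ a = 0 := by
  subst h; rfl

theorem elCast_symm_elCast {x y : C} {f g : x ⟶ y} (h : f = g) (a : elN N (mk3 f)) :
    elCast N h.symm (elCast N h a) = a := by
  subst h; rfl

theorem fpull_zero {x y z : C} (g : x ⟶ y) (f : y ⟶ z) : fpull N g f 0 = 0 :=
  map_zero (N.map (factPullHom g f)).hom

theorem nonempty_elN_idMor_equiv
    (hpush : ∀ {x y z : C} (g : x ⟶ y) (f : y ⟶ z), Function.Bijective (fpush N g f))
    (a : Mor C) : Nonempty (elN N (idMor a.src) ≃ elN N a) := by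
  obtain ⟨x, y, g⟩ := a
  exact ⟨(Equiv.ofBijective _ (hpush (𝟙 x) g)).trans
    (Equiv.cast (congrArg (fun f => elN N (mk3 f)) (Category.id_comp g)))⟩

theorem nonempty_elN_equiv_of_addEquiv
    (hpush : ∀ {x y z : C} (g : x ⟶ y) (f : y ⟶ z), Function.Bijective (fpush N g f))
    {a b : Mor C} (h : Nonempty (elN N (idMor a.src) ≃+ elN N (idMor b.src))) :
    Nonempty (elN N a ≃ elN N b) := by
  obtain ⟨Ea⟩ := nonempty_elN_idMor_equiv hpush a
  obtain ⟨Eb⟩ := nonempty_elN_idMor_equiv hpush b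
  exact ⟨Ea.symm.trans (h.some.toEquiv.trans Eb)⟩

namespace LinExt

variable (L : LinExt C N)

theorem act_injective {x y : C} (e : L.hom x y) : Function.Injective (L.act e) := by
  intro a b h
  have h' := L.act_add e b (a - b)
  rw [add_sub_cancel, h] at h'
  exact sub_eq_zero.1 ((elCast_eq_zero_iff _).1 (L.act_free _ _ h'))

theorem morMap_qFunctor_surjective : Function.Surjective (morMap L.qFunctor) := by
  rintro ⟨x, y, f⟩
  obtain ⟨e, rfl⟩ := L.q_surj f
  exact ⟨⟨x, y, e⟩, rfl⟩

def liftPairs {x y z : C} (f : x ⟶ y) (g : y ⟶ z) (e : L.hom x z) :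
    Set (L.hom x y × L.hom y z) :=
  {p | L.q p.1 = f ∧ L.q p.2 = g ∧ L.comp' p.1 p.2 = e}

theorem liftPairs_nonempty
    (hpush : ∀ {x y z : C} (g : x ⟶ y) (f : y ⟶ z), Function.Surjective (fpush N g f))
    {x y z : C} {f : x ⟶ y} {g : y ⟶ z} {e : L.hom x z} (he : L.q e = f ≫ g) :
    (L.liftPairs f g e).Nonempty := by
  obtain ⟨u, rfl⟩ := L.q_surj f
  obtain ⟨v, rfl⟩ := L.q_surj g
  obtain ⟨γ, hγ⟩ := L.act_trans (L.comp' u v) e (by rw [L.q_comp, he])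
  obtain ⟨β, hβ⟩ := hpush (L.q u) (L.q v) (elCast N (L.q_comp u v) γ)
  refine ⟨(L.act u β, v), L.act_q u β, rfl, ?_⟩
  have hd := L.distrib u v β 0
  rwa [L.act_zero, hβ, fpull_zero, add_zero, elCast_symm_elCast, hγ] at hd

noncomputable def liftPairsCompEquiv
    (hpush : ∀ {x y z : C} (g : x ⟶ y) (f : y ⟶ z), Function.Bijective (fpush N g f))
    {x y z : C} (u₀ : L.hom x y) (v₀ : L.hom y z) :
    elN N (mk3 (L.q v₀)) ≃ L.liftPairs (L.q u₀) (L.q v₀) (L.comp' u₀ v₀) := by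
  let push := Equiv.ofBijective _ (hpush (L.q u₀) (L.q v₀))
  let β : elN N (mk3 (L.q v₀)) → elN N (mk3 (L.q u₀)) :=
    fun α => push.symm (-fpull N (L.q u₀) (L.q v₀) α)
  have hβ : ∀ α, fpush N (L.q u₀) (L.q v₀) (β α) = -fpull N (L.q u₀) (L.q v₀) α :=
    fun α => push.apply_symm_apply _
  refine Equiv.ofBijective (fun α => ⟨(L.act u₀ (β α), L.act v₀ α), L.act_q _ _, L.act_q _ _, ?_⟩)
    ⟨fun α α' h => L.act_injective v₀ (congrArg (fun p => p.1.2) h), ?_⟩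
  · rw [L.distrib, hβ, neg_add_cancel, (elCast_eq_zero_iff _).2 rfl, L.act_zero]
  · rintro ⟨⟨u, v⟩, hu, hv, huv⟩
    obtain ⟨α, rfl⟩ := L.act_trans v₀ v hv.symm
    obtain ⟨β', rfl⟩ := L.act_trans u₀ u hu.symm
    rw [L.distrib] at huv
    have hsum := (elCast_eq_zero_iff _).1 (L.act_free _ _ huv)
    have hβ' : β' = β α := (hpush (L.q u₀) (L.q v₀)).1
      ((eq_neg_of_add_eq_zero_left hsum).trans (hβ α).symm)
    subst hβ'
    exact ⟨α, rfl⟩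

theorem nonempty_liftPairs_equiv
    (hpush : ∀ {x y z : C} (g : x ⟶ y) (f : y ⟶ z), Function.Bijective (fpush N g f))
    {x y z : C} {f : x ⟶ y} {g : y ⟶ z} {e : L.hom x z} (he : L.q e = f ≫ g) :
    Nonempty (L.liftPairs f g e ≃ elN N (mk3 g)) := by
  obtain ⟨⟨u₀, v₀⟩, rfl, rfl, rfl⟩ := L.liftPairs_nonempty (fun g f => (hpush g f).2) he
  exact ⟨(L.liftPairsCompEquiv hpush u₀ v₀).symm⟩

noncomputable def compFiberThroughPreimageEquiv (σ τ : Set (Mor C)) {x z : C}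
    (e : L.hom x z) (y : C) :
    compFiberThrough (morMap L.qFunctor ⁻¹' σ) (morMap L.qFunctor ⁻¹' τ) e y ≃
      Σ p : compFiberThrough σ τ (L.q e) y, L.liftPairs p.1.1 p.1.2 e where
  toFun p := ⟨⟨(L.q p.1.1, L.q p.1.2), p.2.1, p.2.2.1,
    (L.q_comp _ _).symm.trans (congrArg L.q p.2.2.2)⟩, ⟨p.1, rfl, rfl, p.2.2.2⟩⟩
  invFun P := ⟨P.2.1, show mk3 (L.q P.2.1.2) ∈ σ ∧ mk3 (L.q P.2.1.1) ∈ τ ∧ _ by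
    rw [P.2.2.1, P.2.2.2.1]
    exact ⟨P.1.2.1, P.1.2.2.1, P.2.2.2.2⟩⟩
  left_inv _ := rfl
  right_inv := by
    rintro ⟨⟨⟨f, g⟩, _⟩, ⟨u, v⟩, hu, hv, _⟩
    dsimp only at hu hv
    subst hu hv
    rfl

theorem nonempty_compFiber_preimage_equiv
    (hpush : ∀ {x y z : C} (g : x ⟶ y) (f : y ⟶ z), Function.Bijective (fpush N g f))
    (σ τ : Set (Mor C)) (m : Mor L.Carrier) :
    Nonempty (compFiber (morMap L.qFunctor ⁻¹' σ) (morMap L.qFunctor ⁻¹' τ) m ≃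
      Σ p : compFiber σ τ (morMap L.qFunctor m), elN N p.1.1) := by
  obtain ⟨x, z, e⟩ := m
  have hlift : ∀ y (p : compFiberThrough σ τ (L.q e) y),
      Nonempty (L.liftPairs p.1.1 p.1.2 e ≃ elN N (mk3 p.1.2)) :=
    fun _ p => L.nonempty_liftPairs_equiv hpush p.2.2.2.symm
  exact ⟨calc
    _ ≃ Σ y, compFiberThrough (morMap L.qFunctor ⁻¹' σ) (morMap L.qFunctor ⁻¹' τ) e y :=
        (sigmaCompFiberThroughEquiv _ _ e).symm
    _ ≃ Σ y, Σ p : compFiberThrough σ τ (L.q e) y, L.liftPairs p.1.1 p.1.2 e :=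
        Equiv.sigmaCongrRight (L.compFiberThroughPreimageEquiv σ τ e)
    _ ≃ Σ y, Σ p : compFiberThrough σ τ (L.q e) y, elN N (mk3 p.1.2) :=
        Equiv.sigmaCongrRight fun y => Equiv.sigmaCongrRight fun p => (hlift y p).some
    _ ≃ Σ yp : Σ y, compFiberThrough σ τ (L.q e) y, elN N (mk3 yp.2.1.2) :=
        (Equiv.sigmaAssoc fun y (p : compFiberThrough σ τ (L.q e) y) => elN N (mk3 p.1.2)).symm
    _ ≃ Σ p : compFiber σ τ (mk3 (L.q e)), elN N p.1.1 :=
        Equiv.sigmaCongrLeft (β := fun p : compFiber σ τ (mk3 (L.q e)) => elN N p.1.1)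
          (sigmaCompFiberThroughEquiv σ τ (L.q e))⟩

noncomputable def preimageQuasiSchemoid (Q : QuasiSchemoid C)
    (hpush : ∀ {x y z : C} (g : x ⟶ y) (f : y ⟶ z), Function.Bijective (fpush N g f))
    (hiso : ∀ σ ∈ Q.part, ∀ f ∈ σ, ∀ g ∈ σ,
      Nonempty (elN N (idMor (Mor.src f)) ≃+ elN N (idMor (Mor.src g)))) :
    QuasiSchemoid L.Carrier where
  part := preimagePart L Q.part
  isPartition := Q.isPartition.preimage L.morMap_qFunctor_surjective
  concat := by
    rintro _ ⟨σ, hσ, rfl⟩ _ ⟨τ, hτ, rfl⟩ _ ⟨μ, hμ, rfl⟩ f hf g hg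
    obtain ⟨F⟩ := Q.concat σ hσ τ hτ μ hμ _ hf _ hg
    obtain ⟨Ef⟩ := L.nonempty_compFiber_preimage_equiv hpush σ τ f
    obtain ⟨Eg⟩ := L.nonempty_compFiber_preimage_equiv hpush σ τ g
    have hcoeff : ∀ p : compFiber σ τ (morMap L.qFunctor f),
        Nonempty (elN N p.1.1 ≃ elN N (F p).1.1) :=
      fun p => nonempty_elN_equiv_of_addEquiv hpush (hiso σ hσ _ p.2.1 _ (F p).2.1)
    exact ⟨Ef.trans ((Equiv.sigmaCongr F fun p => (hcoeff p).some).trans Eg.symm)⟩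

end LinExt

end

/-- Proposition 5.2 of Kuribayashi–Matsuo: let `D₊ → E → C` be a linear extension and
`(C,S)` a quasi-schemoid such that all `f_*`, `f^*` are invertible and
`D_{1_{s(f)}} ≅ D_{1_{s(g)}}` whenever `f, g` belong to the same class of `S`. Then `E`
admits a unique quasi-schemoid structure for which `q` is a proper morphism of
quasi-schemoids, namely `S̃ = {q⁻¹(σ)}_{σ ∈ S}`. -/
theorem linExt_unique_quasiSchemoid
    {C : Type u} [Category.{v} C] (Q : QuasiSchemoid C)
    (N : FactCat C ⥤ AddCommGrpCat.{w}) (L : LinExt C N)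
    (hinv : ∀ {x y z : C} (g : x ⟶ y) (f : y ⟶ z),
      Function.Bijective (fpush N g f) ∧ Function.Bijective (fpull N g f))
    (hiso : ∀ σ ∈ Q.part, ∀ f ∈ σ, ∀ g ∈ σ,
      Nonempty (elN N (idMor (Mor.src f)) ≃+ elN N (idMor (Mor.src g)))) :
    ∃ S' : QuasiSchemoid L.Carrier,
      S'.part = preimagePart L Q.part ∧
      IsProperQSMor S'.part Q.part L.qFunctor ∧
      ∀ S'' : QuasiSchemoid L.Carrier,
        IsProperQSMor S''.part Q.part L.qFunctor → S''.part = S'.part := by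
  have hq := L.morMap_qFunctor_surjective
  exact ⟨L.preimageQuasiSchemoid Q (fun g f => (hinv g f).1) hiso, rfl,
    isProperQSMor_preimage hq Q.isPartition,
    fun S'' h => h.eq_preimage hq Q.isPartition S''.isPartition⟩
end
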